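/- arXiv:2505.21917 — 4 statements merged into one kernel-verified Lean document; each statement's English description precedes it below -/
import Mathlib

section
/- Let (A,B) be a definite pencil (A, B Hermitian with Crawford number γ(A,B) > 0) and let E, F be Hermitian matrices with √(||E||₂² + ||F||₂²) < γ(A,B). Then the perturbed pencil (A+E, B+F) is definite, and moreover γ(A+E, B+F) ≥ (1 − √(||E||₂² + ||F||₂²)/γ(A,B)) · γ(A,B). -/
open Matrix MeasureTheory ProbabilityTheory
open scoped Classical

noncomputable def specNorm {m n : Type*} [Fintype m] [Fintype n] [DecidableEq n]
    (A : Matrix m n ℂ) : ℝ :=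
  ‖LinearMap.toContinuousLinearMap (Matrix.toEuclideanLin A)‖

noncomputable def crawford {n : ℕ} (A B : Matrix (Fin n) (Fin n) ℂ) : ℝ :=
  sInf { r | ∃ x : EuclideanSpace ℂ (Fin n), ‖x‖ = 1 ∧
    r = ‖star (x : Fin n → ℂ) ⬝ᵥ (A + Complex.I • B).mulVec x‖ }

noncomputable def pencilNorm {n : ℕ} (A B : Matrix (Fin n) (Fin n) ℂ) : ℝ :=
  specNorm (Matrix.fromCols A B)

def symPseudo {n : ℕ} (ε : ℝ) (A B : Matrix (Fin n) (Fin n) ℂ) : Set ℂ :=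
  { z | ∃ E F : Matrix (Fin n) (Fin n) ℂ, E.IsHermitian ∧ F.IsHermitian ∧
      Real.sqrt (specNorm E ^ 2 + specNorm F ^ 2) ≤ ε ∧
      ∃ u : Fin n → ℂ, u ≠ 0 ∧ (A + E).mulVec u = z • (B + F).mulVec u }

noncomputable def smin {n : ℕ} (M : Matrix (Fin n) (Fin n) ℂ) : ℝ :=
  sInf { r | ∃ x : EuclideanSpace ℂ (Fin n), ‖x‖ = 1 ∧ r = ‖Matrix.toEuclideanLin M x‖ }

def pencilEigs {n : ℕ} (A B : Matrix (Fin n) (Fin n) ℂ) : Set ℝ :=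
  { lam | ∃ u : Fin n → ℂ, u ≠ 0 ∧ A.mulVec u = (lam : ℂ) • B.mulVec u }


/-! For a unit vector `x` and Hermitian `E`, `F`, the numbers `x^H E x` and `x^H F x` are real and
bounded by `‖E‖₂`, `‖F‖₂`, so `|x^H (E + iF) x| ≤ √(‖E‖₂² + ‖F‖₂²)`. Since
`x^H ((A + E) + i(B + F)) x = x^H (A + iB) x + x^H (E + iF) x`, the reverse triangle inequality gives
`γ(A + E, B + F) ≥ γ(A, B) - √(‖E‖₂² + ‖F‖₂²)`, which is the claim. -/

lemma norm_star_dotProduct_mulVec_le_specNorm {ι : Type*} [Fintype ι] [DecidableEq ι]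
    (M : Matrix ι ι ℂ) (x : EuclideanSpace ℂ ι) :
    ‖star (x : ι → ℂ) ⬝ᵥ M *ᵥ x‖ ≤ specNorm M * ‖x‖ ^ 2 := by
  have hinner : inner ℂ x (toEuclideanLin M x) = star (x : ι → ℂ) ⬝ᵥ M *ᵥ x := by
    rw [EuclideanSpace.inner_eq_star_dotProduct, toLpLin_apply, dotProduct_comm]
  have hMx : ‖toEuclideanLin M x‖ ≤ specNorm M * ‖x‖ :=
    (LinearMap.toContinuousLinearMap (toEuclideanLin M)).le_opNorm x
  calc ‖star (x : ι → ℂ) ⬝ᵥ M *ᵥ x‖ ≤ ‖x‖ * ‖toEuclideanLin M x‖ :=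
        hinner ▸ norm_inner_le_norm x _
    _ ≤ ‖x‖ * (specNorm M * ‖x‖) := by gcongr
    _ = specNorm M * ‖x‖ ^ 2 := by ring

lemma norm_star_dotProduct_add_I_smul_mulVec_le {ι : Type*} [Fintype ι] [DecidableEq ι]
    {E F : Matrix ι ι ℂ} (hE : E.IsHermitian) (hF : F.IsHermitian)
    {x : EuclideanSpace ℂ ι} (hx : ‖x‖ = 1) :
    ‖star (x : ι → ℂ) ⬝ᵥ (E + Complex.I • F) *ᵥ x‖ ≤
      √(specNorm E ^ 2 + specNorm F ^ 2) := by
  set a := star (x : ι → ℂ) ⬝ᵥ E *ᵥ x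
  set b := star (x : ι → ℂ) ⬝ᵥ F *ᵥ x
  have hsplit : star (x : ι → ℂ) ⬝ᵥ (E + Complex.I • F) *ᵥ x = a.re + b.re * Complex.I := by
    have ha : a = a.re := Complex.ext rfl (by simpa using hE.im_star_dotProduct_mulVec_self x)
    have hb : b = b.re := Complex.ext rfl (by simpa using hF.im_star_dotProduct_mulVec_self x)
    rw [← ha, ← hb, add_mulVec, smul_mulVec, dotProduct_add, dotProduct_smul, smul_eq_mul,
      mul_comm]
  have hnorm (M : Matrix ι ι ℂ) : |(star (x : ι → ℂ) ⬝ᵥ M *ᵥ x).re| ≤ specNorm M := by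
    simpa [hx] using (Complex.abs_re_le_norm _).trans
      (norm_star_dotProduct_mulVec_le_specNorm M x)
  rw [hsplit, Complex.norm_add_mul_I]
  exact Real.sqrt_le_sqrt (add_le_add (sq_le_sq.mpr ((hnorm E).trans (le_abs_self _)))
    (sq_le_sq.mpr ((hnorm F).trans (le_abs_self _))))

lemma crawford_le {n : ℕ} (A B : Matrix (Fin n) (Fin n) ℂ) {x : EuclideanSpace ℂ (Fin n)}
    (hx : ‖x‖ = 1) :
    crawford A B ≤ ‖star (x : Fin n → ℂ) ⬝ᵥ (A + Complex.I • B) *ᵥ x‖ :=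
  csInf_le ⟨0, by rintro r ⟨y, -, rfl⟩; positivity⟩ ⟨x, hx, rfl⟩

lemma le_crawford {n : ℕ} [NeZero n] {A B : Matrix (Fin n) (Fin n) ℂ} {c : ℝ}
    (h : ∀ x : EuclideanSpace ℂ (Fin n), ‖x‖ = 1 →
      c ≤ ‖star (x : Fin n → ℂ) ⬝ᵥ (A + Complex.I • B) *ᵥ x‖) :
    c ≤ crawford A B := by
  refine le_csInf ⟨_, EuclideanSpace.single 0 1, by simp, rfl⟩ ?_
  rintro r ⟨x, hx, rfl⟩
  exact h x hx

lemma crawford_of_fin_zero (A B : Matrix (Fin 0) (Fin 0) ℂ) : crawford A B = 0 := by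
  have hempty : { r | ∃ x : EuclideanSpace ℂ (Fin 0), ‖x‖ = 1 ∧
      r = ‖star (x : Fin 0 → ℂ) ⬝ᵥ (A + Complex.I • B) *ᵥ x‖ } = ∅ := by
    refine Set.eq_empty_iff_forall_notMem.mpr ?_
    rintro r ⟨x, hx, -⟩
    simp [Subsingleton.elim x 0] at hx
  rw [crawford, hempty, Real.sInf_empty]

lemma crawford_sub_le_crawford_add {n : ℕ} (A B : Matrix (Fin n) (Fin n) ℂ)
    {E F : Matrix (Fin n) (Fin n) ℂ} (hE : E.IsHermitian) (hF : F.IsHermitian) :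
    crawford A B - √(specNorm E ^ 2 + specNorm F ^ 2) ≤ crawford (A + E) (B + F) := by
  rcases n.eq_zero_or_pos with rfl | hn
  · simp [crawford_of_fin_zero, Real.sqrt_nonneg]
  have : NeZero n := ⟨hn.ne'⟩
  refine le_crawford fun x hx => ?_
  have hsplit : star (x : Fin n → ℂ) ⬝ᵥ (A + E + Complex.I • (B + F)) *ᵥ x =
      star (x : Fin n → ℂ) ⬝ᵥ (A + Complex.I • B) *ᵥ x +
        star (x : Fin n → ℂ) ⬝ᵥ (E + Complex.I • F) *ᵥ x := by
    rw [← dotProduct_add, ← add_mulVec, smul_add]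
    abel_nf
  calc crawford A B - √(specNorm E ^ 2 + specNorm F ^ 2)
      ≤ ‖star (x : Fin n → ℂ) ⬝ᵥ (A + Complex.I • B) *ᵥ x‖ -
          ‖star (x : Fin n → ℂ) ⬝ᵥ (E + Complex.I • F) *ᵥ x‖ :=
        sub_le_sub (crawford_le A B hx) (norm_star_dotProduct_add_I_smul_mulVec_le hE hF hx)
    _ ≤ _ := hsplit ▸ norm_sub_le_norm_add _ _

theorem definite_under_perturbation_general {n : ℕ} (A B E F : Matrix (Fin n) (Fin n) ℂ)
    (hE : E.IsHermitian) (hF : F.IsHermitian)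
    (hsize : Real.sqrt (specNorm E ^ 2 + specNorm F ^ 2) < crawford A B) :
    0 < crawford (A + E) (B + F) ∧
    (1 - Real.sqrt (specNorm E ^ 2 + specNorm F ^ 2) / crawford A B) * crawford A B ≤
      crawford (A + E) (B + F) := by
  have hlow := crawford_sub_le_crawford_add A B hE hF
  have hγ : crawford A B ≠ 0 := (hsize.trans_le' (Real.sqrt_nonneg _)).ne'
  refine ⟨by linarith, ?_⟩
  rwa [sub_mul, one_mul, div_mul_cancel₀ _ hγ]

theorem definite_under_perturbation {n : ℕ} (A B E F : Matrix (Fin n) (Fin n) ℂ)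
    (hA : A.IsHermitian) (hB : B.IsHermitian) (hE : E.IsHermitian) (hF : F.IsHermitian)
    (hdef : 0 < crawford A B)
    (hsize : Real.sqrt (specNorm E ^ 2 + specNorm F ^ 2) < crawford A B) :
    0 < crawford (A + E) (B + F) ∧
    (1 - Real.sqrt (specNorm E ^ 2 + specNorm F ^ 2) / crawford A B) * crawford A B ≤
      crawford (A + E) (B + F) :=
  definite_under_perturbation_general A B E F hE hF hsize
end

section
/- Let (A,B) be a definite pencil with Crawford number γ(A,B) and let 0 < ε < γ(A,B). Then a complex number z belongs to the symmetric ε-pseudospectrum Λ_ε^sym(A,B) if and only if z is real and σ_min(A − zB) ≤ ε√(1 + |z|²). -/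
open Matrix MeasureTheory ProbabilityTheory
open scoped Classical

/-! If `(A + E) x = z (B + F) x` for a unit vector `x`, the real numbers `x*(A+E)x` and
`x*(B+F)x` are related by the factor `z`, and they cannot both vanish: `x*(A+iB)x` has modulus
at least `γ(A,B) > ε`, while `x*(E+iF)x` has modulus at most `√(‖E‖² + ‖F‖²) ≤ ε`. Hence `z` is
real, and the residual `(A - zB) x = z F x - E x` is at most `ε √(1 + |z|²)` by Cauchy–Schwarz.

Conversely, for real `z` let `x` be a unit vector attaining `σ_min(A - zB)` and `r = (A - zB) x`.
Since `x*r` is real, `‖r‖` times the Householder reflection exchanging `x` and `r / ‖r‖` is a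
Hermitian `G` with `G x = r` and `‖G‖ ≤ ‖r‖`; then `E = -G / (1 + z²)`, `F = z G / (1 + z²)`
give `(A + E) x = z (B + F) x` with `√(‖E‖² + ‖F‖²) = ‖G‖ / √(1 + z²) ≤ ε`. -/

open scoped InnerProductSpace

section Reflection

open RCLike Submodule ContinuousLinearMap

variable {𝕜 E : Type*} [RCLike 𝕜] [NormedAddCommGroup E] [InnerProductSpace 𝕜 E]

theorem Submodule.reflection_sub_of_im_inner_eq_zero {v w : E} (h : ‖v‖ = ‖w‖)
    (hvw : im ⟪v, w⟫_𝕜 = 0) : reflection (𝕜 ∙ (v - w))ᗮ v = w := by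
  set R : E ≃ₗᵢ[𝕜] E := reflection (𝕜 ∙ (v - w))ᗮ
  suffices R v + R v = w + w by
    apply smul_right_injective E (by simp : (2 : 𝕜) ≠ 0)
    simpa [two_smul] using this
  have h₁ : R (v - w) = -(v - w) := reflection_orthogonalComplement_singleton_eq_neg (v - w)
  have h₂ : R (v + w) = v + w := by
    apply reflection_mem_subspace_eq_self
    rw [Submodule.mem_orthogonal_singleton_iff_inner_left, inner_add_left, inner_sub_right,
      inner_sub_right, inner_self_eq_norm_sq_to_K, inner_self_eq_norm_sq_to_K, h,
      ← inner_conj_symm w v, conj_eq_iff_im.mpr hvw]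
    ring
  convert! congr_arg₂ (· + ·) h₂ h₁ using 1
  · simp
  · abel

variable [CompleteSpace E]

theorem Submodule.isSelfAdjoint_reflection (K : Submodule 𝕜 E) [K.HasOrthogonalProjection] :
    IsSelfAdjoint (K.reflection : E →L[𝕜] E) := by
  rw [isSelfAdjoint_iff_isSymmetric]
  intro x y
  simpa using K.reflection.inner_map_map x (K.reflection y)

theorem exists_isSelfAdjoint_apply_eq {x y : E} (hx : ‖x‖ = 1) (hxy : im ⟪x, y⟫_𝕜 = 0) :
    ∃ g : E →L[𝕜] E, IsSelfAdjoint g ∧ g x = y ∧ ‖g‖ ≤ ‖y‖ := by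
  rcases eq_or_ne y 0 with rfl | hy
  · exact ⟨0, .zero _, rfl, by simp⟩
  have hy' : (‖y‖ : 𝕜) ≠ 0 := by simpa using hy
  set w : E := (‖y‖⁻¹ : 𝕜) • y
  have hw : ‖w‖ = 1 := norm_smul_inv_norm hy
  have hxw : im ⟪x, w⟫_𝕜 = 0 := by
    rw [inner_smul_right, ← ofReal_inv, im_ofReal_mul, hxy, mul_zero]
  have hr : IsSelfAdjoint (‖y‖ : 𝕜) := conj_ofReal _
  refine ⟨(‖y‖ : 𝕜) • (reflection (𝕜 ∙ (x - w))ᗮ : E →L[𝕜] E),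
    hr.smul (isSelfAdjoint_reflection _), ?_, ?_⟩
  · change (‖y‖ : 𝕜) • reflection (𝕜 ∙ (x - w))ᗮ x = y
    rw [reflection_sub_of_im_inner_eq_zero (hx.trans hw.symm) hxw, smul_smul,
      mul_inv_cancel₀ hy', one_smul]
  · rw [norm_smul, norm_algebraMap', norm_norm]
    exact mul_le_of_le_one_right (norm_nonneg y)
      (reflection (𝕜 ∙ (x - w))ᗮ).toLinearIsometry.norm_toContinuousLinearMap_le

end Reflection

theorem Real.mul_add_mul_le_sqrt_mul_sqrt (a b c d : ℝ) :
    a * c + b * d ≤ √(a ^ 2 + b ^ 2) * √(c ^ 2 + d ^ 2) := by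
  rw [← Real.sqrt_mul (by positivity)]
  exact Real.le_sqrt_of_sq_le (by nlinarith [sq_nonneg (a * d - b * c)])

theorem Complex.im_eq_zero_of_ofReal_eq_mul {z : ℂ} {p q : ℝ} (h : (p : ℂ) = z * q)
    (hpq : p ≠ 0 ∨ q ≠ 0) : z.im = 0 := by
  have him : z.im * q = 0 := by simpa using (congrArg Complex.im h).symm
  refine (mul_eq_zero.mp him).resolve_right fun hq ↦ ?_
  have hp : p = 0 := by exact_mod_cast (by simpa [hq] using h : (p : ℂ) = 0)
  exact hpq.elim (· hp) (· hq)

theorem ContinuousLinearMap.norm_inner_apply_self_le {𝕜 E : Type*} [RCLike 𝕜]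
    [NormedAddCommGroup E] [InnerProductSpace 𝕜 E] (T : E →L[𝕜] E) {x : E} (hx : ‖x‖ = 1) :
    ‖⟪x, T x⟫_𝕜‖ ≤ ‖T‖ :=
  calc ‖⟪x, T x⟫_𝕜‖ ≤ ‖x‖ * ‖T x‖ := norm_inner_le_norm x (T x)
    _ ≤ ‖T‖ := by simpa [hx] using T.le_opNorm x

theorem ContinuousLinearMap.norm_sub_smul_apply_le {𝕜 E : Type*} [NontriviallyNormedField 𝕜]
    [SeminormedAddCommGroup E] [NormedSpace 𝕜 E] {a b e f : E →L[𝕜] E} {x : E} (hx : ‖x‖ = 1)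
    {z : 𝕜} (hz : (a + e) x = z • (b + f) x) :
    ‖(a - z • b) x‖ ≤ √(‖e‖ ^ 2 + ‖f‖ ^ 2) * √(1 + ‖z‖ ^ 2) := by
  have hres : (a - z • b) x = z • f x - e x := by
    simp only [_root_.add_apply, _root_.sub_apply, _root_.smul_apply] at hz ⊢
    linear_combination (norm := module) hz
  calc ‖(a - z • b) x‖ ≤ ‖z‖ * ‖f‖ + ‖e‖ := by
        rw [hres]
        refine (norm_sub_le _ _).trans ?_
        rw [norm_smul]
        gcongr <;> simpa [hx] using le_opNorm _ x
    _ ≤ √(‖e‖ ^ 2 + ‖f‖ ^ 2) * √(1 + ‖z‖ ^ 2) := by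
        simpa [add_comm, mul_comm] using Real.mul_add_mul_le_sqrt_mul_sqrt ‖e‖ ‖f‖ 1 ‖z‖

section Pencil

open Complex ContinuousLinearMap

variable {E : Type*} [NormedAddCommGroup E] [InnerProductSpace ℂ E] [CompleteSpace E]

def symPseudospectrum (ε : ℝ) (a b : E →L[ℂ] E) : Set ℂ :=
  {z | ∃ e f : E →L[ℂ] E, IsSelfAdjoint e ∧ IsSelfAdjoint f ∧ √(‖e‖ ^ 2 + ‖f‖ ^ 2) ≤ ε ∧
    ∃ x ≠ 0, (a + e) x = z • (b + f) x}

theorem IsSelfAdjoint.inner_apply_self_eq_re {a : E →L[ℂ] E} (ha : IsSelfAdjoint a) (x : E) :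
    ⟪x, a x⟫_ℂ = (⟪x, a x⟫_ℂ).re :=
  (ha.isSymmetric.coe_re_inner_self_apply x).symm

theorem norm_inner_add_I_smul_apply_le {e f : E →L[ℂ] E} (he : IsSelfAdjoint e)
    (hf : IsSelfAdjoint f) {x : E} (hx : ‖x‖ = 1) :
    ‖⟪x, (e + I • f) x⟫_ℂ‖ ≤ √(‖e‖ ^ 2 + ‖f‖ ^ 2) := by
  rw [_root_.add_apply, _root_.smul_apply, inner_add_right, inner_smul_right,
    he.inner_apply_self_eq_re, hf.inner_apply_self_eq_re, mul_comm I, norm_add_mul_I]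
  have hre (T : E →L[ℂ] E) : (⟪x, T x⟫_ℂ).re ^ 2 ≤ ‖T‖ ^ 2 := by
    simpa only [sq_abs] using pow_le_pow_left₀ (abs_nonneg _)
      ((abs_re_le_norm _).trans (T.norm_inner_apply_self_le hx)) 2
  exact Real.sqrt_le_sqrt (add_le_add (hre e) (hre f))

theorem im_eq_zero_of_apply_eq_smul {a b e f : E →L[ℂ] E} (ha : IsSelfAdjoint a)
    (hb : IsSelfAdjoint b) (he : IsSelfAdjoint e) (hf : IsSelfAdjoint f) {x : E} (hx : ‖x‖ = 1)
    {z : ℂ} (hz : (a + e) x = z • (b + f) x)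
    (hγ : √(‖e‖ ^ 2 + ‖f‖ ^ 2) < ‖⟪x, (a + I • b) x⟫_ℂ‖) : z.im = 0 := by
  set p := (⟪x, (a + e) x⟫_ℂ).re
  set q := (⟪x, (b + f) x⟫_ℂ).re
  have hp : ⟪x, (a + e) x⟫_ℂ = p := (ha.add he).inner_apply_self_eq_re x
  have hq : ⟪x, (b + f) x⟫_ℂ = q := (hb.add hf).inner_apply_self_eq_re x
  have hpq : (p : ℂ) = z * q := by rw [← hp, ← hq, hz, inner_smul_right]
  refine im_eq_zero_of_ofReal_eq_mul hpq ?_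
  by_contra! h0
  have hsplit : ⟪x, (a + I • b) x⟫_ℂ = (p + q * I) - ⟪x, (e + I • f) x⟫_ℂ := by
    rw [← hp, ← hq]
    simp only [_root_.add_apply, _root_.smul_apply, inner_add_right, inner_smul_right]
    ring
  rw [hsplit, h0.1, h0.2] at hγ
  simp only [ofReal_zero, zero_mul, add_zero, zero_sub, norm_neg] at hγ
  exact hγ.not_ge (norm_inner_add_I_smul_apply_le he hf hx)

theorem im_eq_zero_and_exists_norm_le_of_mem_symPseudospectrum {ε : ℝ} {a b : E →L[ℂ] E}
    (ha : IsSelfAdjoint a) (hb : IsSelfAdjoint b)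
    (hγ : ∀ x : E, ‖x‖ = 1 → ε < ‖⟪x, (a + I • b) x⟫_ℂ‖) {z : ℂ}
    (hz : z ∈ symPseudospectrum ε a b) :
    z.im = 0 ∧ ∃ x : E, ‖x‖ = 1 ∧ ‖(a - z • b) x‖ ≤ ε * √(1 + ‖z‖ ^ 2) := by
  obtain ⟨e, f, he, hf, hε, y, hy, hyz⟩ := hz
  set x : E := (‖y‖⁻¹ : ℂ) • y
  have hx : ‖x‖ = 1 := norm_smul_inv_norm hy
  have hxz : (a + e) x = z • (b + f) x := by rw [map_smul, map_smul, hyz, smul_comm]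
  exact ⟨im_eq_zero_of_apply_eq_smul ha hb he hf hx hxz (hε.trans_lt (hγ x hx)), x, hx,
    (norm_sub_smul_apply_le hx hxz).trans (by gcongr)⟩

theorem mem_symPseudospectrum_of_norm_le {ε : ℝ} {a b : E →L[ℂ] E} (ha : IsSelfAdjoint a)
    (hb : IsSelfAdjoint b) {z : ℂ} (hz : z.im = 0) {x : E} (hx : ‖x‖ = 1)
    (h : ‖(a - z • b) x‖ ≤ ε * √(1 + ‖z‖ ^ 2)) : z ∈ symPseudospectrum ε a b := by
  obtain ⟨t, rfl⟩ : ∃ t : ℝ, z = t := conj_eq_iff_real.mp (conj_eq_iff_im.mpr hz)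
  rw [norm_real, Real.norm_eq_abs, sq_abs] at h
  have hreal (u : ℝ) : IsSelfAdjoint (u : ℂ) := conj_ofReal u
  have hr : RCLike.im ⟪x, (a - (t : ℂ) • b) x⟫_ℂ = 0 :=
    (ha.sub ((hreal t).smul hb)).isSymmetric.im_inner_self_apply x
  obtain ⟨g, hg, hgx, hgr⟩ := exists_isSelfAdjoint_apply_eq hx hr
  set s := √(1 + t ^ 2)
  have hs : s ^ 2 = 1 + t ^ 2 := Real.sq_sqrt (by positivity)
  set c : ℝ := (s ^ 2)⁻¹
  refine ⟨((-c : ℝ) : ℂ) • g, ((c * t : ℝ) : ℂ) • g, (hreal _).smul hg, (hreal _).smul hg, ?_,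
    x, norm_ne_zero_iff.mp (by simp [hx]), ?_⟩
  · have hnorm : ‖((-c : ℝ) : ℂ) • g‖ ^ 2 + ‖((c * t : ℝ) : ℂ) • g‖ ^ 2 =
        (c * ‖g‖ * s) ^ 2 := by
      simp only [norm_smul, norm_real, Real.norm_eq_abs, abs_mul, mul_pow, sq_abs, hs]
      ring
    rw [hnorm, Real.sqrt_sq (by positivity)]
    calc c * ‖g‖ * s ≤ c * (ε * s) * s := by gcongr; exact hgr.trans h
      _ = ε * (c * s ^ 2) := by ring
      _ = ε := by rw [inv_mul_cancel₀ (by positivity), mul_one]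
  · have hc : ((c * (1 + t ^ 2) : ℝ) : ℂ) = 1 := by
      rw [← hs, inv_mul_cancel₀ (by positivity), ofReal_one]
    simp only [_root_.add_apply, _root_.sub_apply, _root_.smul_apply, hgx]
    push_cast at hc ⊢
    linear_combination (norm := module) -(hc • (a x - (t : ℂ) • b x))

end Pencil

local notation "𝐓" => toEuclideanCLM (n := Fin _) (𝕜 := ℂ)

section Matrix

open Complex

theorem Matrix.star_dotProduct_mulVec_eq_inner {𝕜 ι : Type*} [RCLike 𝕜] [Fintype ι]
    [DecidableEq ι] (M : Matrix ι ι 𝕜) (x : EuclideanSpace 𝕜 ι) :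
    star (WithLp.ofLp x) ⬝ᵥ M *ᵥ WithLp.ofLp x = ⟪x, toEuclideanCLM (𝕜 := 𝕜) M x⟫_𝕜 :=
  dotProduct_comm _ _

variable {n : ℕ}

theorem isSelfAdjoint_toEuclideanCLM_iff {M : Matrix (Fin n) (Fin n) ℂ} :
    IsSelfAdjoint (𝐓 M) ↔ M.IsHermitian :=
  ⟨fun h ↦ (𝐓).injective ((map_star (𝐓) M).trans h.star_eq), fun h ↦ h.isSelfAdjoint.map _⟩

theorem symPseudo_eq_symPseudospectrum (ε : ℝ) (A B : Matrix (Fin n) (Fin n) ℂ) :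
    symPseudo ε A B = symPseudospectrum ε (𝐓 A) (𝐓 B) := by
  ext z
  constructor
  · rintro ⟨E, F, hE, hF, hEF, u, hu, hAB⟩
    refine ⟨𝐓 E, 𝐓 F, isSelfAdjoint_toEuclideanCLM_iff.mpr hE,
      isSelfAdjoint_toEuclideanCLM_iff.mpr hF, hEF, WithLp.toLp 2 u, by simpa using hu, ?_⟩
    simpa [← map_add] using congrArg (WithLp.toLp 2) hAB
  · rintro ⟨e, f, he, hf, hef, x, hx, hab⟩
    obtain ⟨E, rfl⟩ := EquivLike.surjective (𝐓) e
    obtain ⟨F, rfl⟩ := EquivLike.surjective (𝐓) f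
    refine ⟨E, F, isSelfAdjoint_toEuclideanCLM_iff.mp he, isSelfAdjoint_toEuclideanCLM_iff.mp hf,
      hef, WithLp.ofLp x, by simpa using hx, ?_⟩
    simpa [add_mulVec] using congrArg WithLp.ofLp hab

theorem crawford_le_norm_inner (A B : Matrix (Fin n) (Fin n) ℂ)
    {x : EuclideanSpace ℂ (Fin n)} (hx : ‖x‖ = 1) :
    crawford A B ≤ ‖⟪x, (𝐓 A + I • 𝐓 B) x⟫_ℂ‖ := by
  refine csInf_le ⟨0, fun _ ⟨_, _, hr⟩ ↦ hr ▸ norm_nonneg _⟩ ⟨x, hx, ?_⟩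
  rw [star_dotProduct_mulVec_eq_inner, map_add, map_smul]

theorem smin_le_norm (M : Matrix (Fin n) (Fin n) ℂ) {x : EuclideanSpace ℂ (Fin n)}
    (hx : ‖x‖ = 1) : smin M ≤ ‖𝐓 M x‖ :=
  csInf_le ⟨0, fun _ ⟨_, _, hr⟩ ↦ hr ▸ norm_nonneg _⟩ ⟨x, hx, rfl⟩

theorem exists_norm_eq_smin (hn : 0 < n) (M : Matrix (Fin n) (Fin n) ℂ) :
    ∃ x : EuclideanSpace ℂ (Fin n), ‖x‖ = 1 ∧ ‖𝐓 M x‖ = smin M := by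
  have : Nonempty (Fin n) := ⟨⟨0, hn⟩⟩
  have hS : {r | ∃ x : EuclideanSpace ℂ (Fin n), ‖x‖ = 1 ∧ r = ‖toEuclideanLin M x‖} =
      (fun x ↦ ‖𝐓 M x‖) '' Metric.sphere 0 1 := by
    ext r
    simp only [Set.mem_ofPred_eq, Set.mem_image, mem_sphere_iff_norm, sub_zero, eq_comm (a := r)]
    rfl
  have hmem := ((isCompact_sphere (0 : EuclideanSpace ℂ (Fin n)) 1).image
    (𝐓 M).continuous.norm).sInf_mem ((NormedSpace.sphere_nonempty.mpr zero_le_one).image _)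
  rw [← hS] at hmem
  obtain ⟨x, hx, hxM⟩ := hmem
  exact ⟨x, hx, hxM.symm⟩

end Matrix

theorem symPseudo_characterization_general {n : ℕ} (hn : 0 < n) (A B : Matrix (Fin n) (Fin n) ℂ)
    (hA : A.IsHermitian) (hB : B.IsHermitian)
    (ε : ℝ) (hεγ : ε < crawford A B) (z : ℂ) :
    z ∈ symPseudo ε A B ↔
      z.im = 0 ∧ smin (A - z • B) ≤ ε * Real.sqrt (1 + ‖z‖ ^ 2) := by
  have ha := isSelfAdjoint_toEuclideanCLM_iff.mpr hA
  have hb := isSelfAdjoint_toEuclideanCLM_iff.mpr hB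
  have hAB : 𝐓 (A - z • B) = 𝐓 A - z • 𝐓 B := by rw [map_sub, map_smul]
  rw [symPseudo_eq_symPseudospectrum]
  constructor
  · intro hz
    obtain ⟨him, x, hx, hxz⟩ := im_eq_zero_and_exists_norm_le_of_mem_symPseudospectrum ha hb
      (fun x hx ↦ hεγ.trans_le (crawford_le_norm_inner A B hx)) hz
    exact ⟨him, (smin_le_norm _ hx).trans (hAB ▸ hxz)⟩
  · rintro ⟨him, hz⟩
    obtain ⟨x, hx, hxz⟩ := exists_norm_eq_smin hn (A - z • B)
    exact mem_symPseudospectrum_of_norm_le ha hb him hx (hAB ▸ hxz ▸ hz)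

theorem symPseudo_characterization {n : ℕ} (hn : 0 < n) (A B : Matrix (Fin n) (Fin n) ℂ)
    (hA : A.IsHermitian) (hB : B.IsHermitian)
    (ε : ℝ) (hε : 0 < ε) (hεγ : ε < crawford A B) (z : ℂ) :
    z ∈ symPseudo ε A B ↔
      z.im = 0 ∧ smin (A - z • B) ≤ ε * Real.sqrt (1 + ‖z‖ ^ 2) :=
  symPseudo_characterization_general hn A B hA hB ε hεγ z
end

section
/- Let (A,B) be a definite pencil with γ(A,B) > ε > 0. Then Λ_{ε/√2}(A,B) ∩ ℝ ⊆ Λ_ε^sym(A,B) ⊆ Λ_ε(A,B) ∩ ℝ, where Λ_ε(A,B) is the unstructured ε-pseudospectrum allowing arbitrary perturbations E, F with ||E||₂, ||F||₂ ≤ ε. -/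
open Matrix MeasureTheory ProbabilityTheory
open scoped Classical

def genPseudo {n : ℕ} (ε : ℝ) (A B : Matrix (Fin n) (Fin n) ℂ) : Set ℂ :=
  { z | ∃ E F : Matrix (Fin n) (Fin n) ℂ, specNorm E ≤ ε ∧ specNorm F ≤ ε ∧
      ∃ u : Fin n → ℂ, u ≠ 0 ∧ (A + E).mulVec u = z • (B + F).mulVec u }

/-!
For real `t`, what decides whether `t ∈ Λ_ε^sym(A,B)` is the residual `r = (tB - A)u` of a
vector `u`. As `u* r` is real, a Hermitian `H` with `H u = r` and `‖H‖ ‖u‖ ≤ ‖r‖` exists (a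
rescaled Householder reflection), and `E = H / (1 + t²)`, `F = -t H / (1 + t²)` satisfy
`(A + E)u = t(B + F)u` with `‖E‖² + ‖F‖² = ‖H‖² / (1 + t²)`. An unstructured perturbation of
size `ε/√2` leaves a residual of norm at most `ε(1 + |t|)/√2 ‖u‖ ≤ ε √(1 + t²) ‖u‖`, whence the
first inclusion. Conversely, Hermitian perturbations of joint size `ε < γ(A,B)` keep the pencil
definite, as `|u*((A + E) + i(B + F))u| ≥ (γ(A,B) - ε)‖u‖²`, and a definite Hermitian pencil has
only real eigenvalues: `u*(A + E)u = z · u*(B + F)u` with both forms real and not both zero.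
-/

open scoped InnerProductSpace Matrix.Norms.L2Operator
open WithLp (toLp)

section InnerProductSpace

variable {𝕜 E : Type*} [RCLike 𝕜] [NormedAddCommGroup E] [InnerProductSpace 𝕜 E]

namespace Submodule

theorem reflection_sub_of_inner_comm {v w : E} (hn : ‖v‖ = ‖w‖) (hi : ⟪v, w⟫_𝕜 = ⟪w, v⟫_𝕜) :
    reflection (𝕜 ∙ (v - w))ᗮ v = w := by
  set R := reflection (𝕜 ∙ (v - w))ᗮ
  suffices R v + R v = w + w by
    apply smul_right_injective E (two_ne_zero : (2 : 𝕜) ≠ 0)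
    simpa [two_smul] using this
  have h₁ : R (v - w) = -(v - w) := reflection_orthogonalComplement_singleton_eq_neg (v - w)
  have h₂ : R (v + w) = v + w := by
    apply reflection_mem_subspace_eq_self
    rw [mem_orthogonal_singleton_iff_inner_left, inner_add_left, inner_sub_right,
      inner_sub_right, hi, inner_self_eq_norm_sq_to_K, inner_self_eq_norm_sq_to_K, hn]
    ring
  convert congr_arg₂ (· + ·) h₂ h₁ using 1
  · simp
  · abel

theorem isSelfAdjoint_reflection_s5 [CompleteSpace E] (K : Submodule 𝕜 E)
    [K.HasOrthogonalProjection] : IsSelfAdjoint (K.reflection : E →L[𝕜] E) := by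
  have hP := isSelfAdjoint_starProjection K
  have : (K.reflection : E →L[𝕜] E) = 2 • K.starProjection - 1 := by
    ext x; exact reflection_apply x
  rw [this, two_smul]
  exact (hP.add hP).sub (.one _)

end Submodule

theorem exists_isSelfAdjoint_apply_eq_s5 [CompleteSpace E] {u r : E} (hu : u ≠ 0)
    (hur : RCLike.im ⟪u, r⟫_𝕜 = 0) :
    ∃ T : E →L[𝕜] E, IsSelfAdjoint T ∧ T u = r ∧ ‖T‖ * ‖u‖ ≤ ‖r‖ := by
  obtain rfl | hr := eq_or_ne r 0
  · exact ⟨0, .zero _, by simp, by simp⟩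
  have hu' : 0 < ‖u‖ := norm_pos_iff.mpr hu
  set c : ℝ := ‖r‖ / ‖u‖ with hc
  have hc0 : 0 < c := div_pos (norm_pos_iff.mpr hr) hu'
  set w : E := ((c⁻¹ : ℝ) : 𝕜) • r
  have hw : (c : 𝕜) • w = r := by
    simp only [w, smul_smul, ← RCLike.ofReal_mul, mul_inv_cancel₀ hc0.ne', RCLike.ofReal_one,
      one_smul]
  have hnw : ‖u‖ = ‖w‖ := by
    rw [norm_smul, RCLike.norm_ofReal, abs_of_pos (inv_pos.mpr hc0), hc]
    field_simp
  have hiw : ⟪u, w⟫_𝕜 = ⟪w, u⟫_𝕜 := by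
    have hru : ⟪r, u⟫_𝕜 = ⟪u, r⟫_𝕜 := by rw [← inner_conj_symm, RCLike.conj_eq_iff_im.mpr hur]
    rw [inner_smul_right, inner_smul_left, RCLike.conj_ofReal, hru]
  set R := (𝕜 ∙ (u - w))ᗮ.reflection
  refine ⟨(c : 𝕜) • (R : E →L[𝕜] E), ?_, ?_, ?_⟩
  · exact IsSelfAdjoint.smul (RCLike.conj_ofReal c) (Submodule.isSelfAdjoint_reflection_s5 _)
  · change (c : 𝕜) • R u = r
    rw [Submodule.reflection_sub_of_inner_comm hnw hiw, hw]
  · calc ‖(c : 𝕜) • (R : E →L[𝕜] E)‖ * ‖u‖ ≤ c * ‖u‖ := by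
          rw [norm_smul, RCLike.norm_ofReal, abs_of_pos hc0]
          gcongr
          exact mul_le_of_le_one_right hc0.le R.toLinearIsometry.norm_toContinuousLinearMap_le
      _ = ‖r‖ := by rw [hc]; field_simp

end InnerProductSpace

namespace Matrix

variable {𝕜 n : Type*} [RCLike 𝕜] [Fintype n]

theorem im_eq_zero_of_mulVec_eq_smul_mulVec {A B : Matrix n n ℂ} (hA : A.IsHermitian)
    (hB : B.IsHermitian) {z : ℂ} {x : n → ℂ}
    (hx : star x ⬝ᵥ (A + Complex.I • B) *ᵥ x ≠ 0) (h : A *ᵥ x = z • B *ᵥ x) : z.im = 0 := by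
  set a := star x ⬝ᵥ A *ᵥ x
  set b := star x ⬝ᵥ B *ᵥ x
  have ha : a.im = 0 := hA.im_star_dotProduct_mulVec_self x
  have hb : b.im = 0 := hB.im_star_dotProduct_mulVec_self x
  have hab : a = z * b := by rw [← smul_eq_mul, ← dotProduct_smul, ← h]
  have hb0 : b.re ≠ 0 := by
    intro hb0
    have hb0 : b = 0 := Complex.ext hb0 hb
    apply hx
    rw [add_mulVec, smul_mulVec, dotProduct_add, dotProduct_smul]
    change a + Complex.I • b = 0
    simp [hab, hb0]
  have him : z.im * b.re = 0 := by
    simpa [Complex.mul_im, ha, hb] using (congrArg Complex.im hab).symm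
  exact (mul_eq_zero.mp him).resolve_right hb0

variable [DecidableEq n]

theorem exists_isHermitian_mulVec_eq {u r : n → 𝕜} (hu : u ≠ 0)
    (hur : RCLike.im (star u ⬝ᵥ r) = 0) :
    ∃ H : Matrix n n 𝕜, H.IsHermitian ∧ H *ᵥ u = r ∧ ‖H‖ * ‖toLp 2 u‖ ≤ ‖toLp 2 r‖ := by
  have hinner : RCLike.im ⟪toLp 2 u, toLp 2 r⟫_𝕜 = 0 := by
    rwa [EuclideanSpace.inner_toLp_toLp, dotProduct_comm]
  obtain ⟨T, hT, hTu, hTn⟩ := exists_isSelfAdjoint_apply_eq_s5 (by simpa using hu) hinner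
  obtain ⟨H, rfl⟩ : ∃ H, toEuclideanCLM (𝕜 := 𝕜) (n := n) H = T :=
    ⟨_, StarAlgEquiv.apply_symm_apply _ T⟩
  have hH : IsSelfAdjoint H :=
    EquivLike.injective (toEuclideanCLM (𝕜 := 𝕜) (n := n)) ((map_star _ _).trans hT)
  refine ⟨H, hH.isHermitian, ?_, hTn⟩
  rw [toEuclideanCLM_toLp] at hTu
  exact WithLp.toLp_injective 2 hTu

theorem norm_star_dotProduct_mulVec_le (M : Matrix n n 𝕜) (x : n → 𝕜) :
    ‖star x ⬝ᵥ M *ᵥ x‖ ≤ ‖M‖ * ‖toLp 2 x‖ ^ 2 := by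
  have hM : star x ⬝ᵥ M *ᵥ x = ⟪toLp 2 x, toEuclideanCLM (𝕜 := 𝕜) M (toLp 2 x)⟫_𝕜 := by
    rw [EuclideanSpace.inner_eq_star_dotProduct, dotProduct_comm]; rfl
  rw [hM, cstar_norm_def]
  calc _ ≤ ‖toLp 2 x‖ * ‖toEuclideanCLM (𝕜 := 𝕜) M (toLp 2 x)‖ := norm_inner_le_norm _ _
    _ ≤ ‖toLp 2 x‖ * (‖toEuclideanCLM (𝕜 := 𝕜) M‖ * ‖toLp 2 x‖) := by
        gcongr; exact ContinuousLinearMap.le_opNorm _ _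
    _ = _ := by ring

theorem norm_sub_mulVec_le_of_add_mulVec_eq {A B E F : Matrix n n 𝕜} {z : 𝕜} {u : n → 𝕜}
    (h : (A + E) *ᵥ u = z • (B + F) *ᵥ u) :
    ‖toLp 2 (z • B *ᵥ u - A *ᵥ u)‖ ≤ (‖E‖ + ‖z‖ * ‖F‖) * ‖toLp 2 u‖ := by
  have hres : z • B *ᵥ u - A *ᵥ u = E *ᵥ u - z • F *ᵥ u := by
    rw [add_mulVec, add_mulVec, smul_add] at h
    rw [sub_eq_sub_iff_add_eq_add, ← h, add_comm]
  rw [hres, WithLp.toLp_sub, WithLp.toLp_smul]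
  calc _ ≤ ‖toLp 2 (E *ᵥ u)‖ + ‖z‖ * ‖toLp 2 (F *ᵥ u)‖ :=
        (norm_sub_le _ _).trans_eq (by rw [norm_smul])
    _ ≤ ‖E‖ * ‖toLp 2 u‖ + ‖z‖ * (‖F‖ * ‖toLp 2 u‖) := by
        gcongr <;> exact l2_opNorm_mulVec _ _
    _ = _ := by ring

theorem norm_star_dotProduct_add_I_smul_mulVec_le {E F : Matrix n n ℂ} (hE : E.IsHermitian)
    (hF : F.IsHermitian) (x : n → ℂ) :
    ‖star x ⬝ᵥ (E + Complex.I • F) *ᵥ x‖ ≤ √(‖E‖ ^ 2 + ‖F‖ ^ 2) * ‖toLp 2 x‖ ^ 2 := by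
  set p := star x ⬝ᵥ E *ᵥ x
  set q := star x ⬝ᵥ F *ᵥ x
  have hp : (p.re : ℂ) = p := Complex.ext rfl (hE.im_star_dotProduct_mulVec_self x).symm
  have hq : (q.re : ℂ) = q := Complex.ext rfl (hF.im_star_dotProduct_mulVec_self x).symm
  have hpq : star x ⬝ᵥ (E + Complex.I • F) *ᵥ x = p.re + q.re * Complex.I := by
    rw [add_mulVec, smul_mulVec, dotProduct_add, dotProduct_smul, hp, hq, smul_eq_mul, mul_comm]
  have hpE : |p.re| ≤ ‖E‖ * ‖toLp 2 x‖ ^ 2 :=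
    (Complex.abs_re_le_norm p).trans (norm_star_dotProduct_mulVec_le E x)
  have hqF : |q.re| ≤ ‖F‖ * ‖toLp 2 x‖ ^ 2 :=
    (Complex.abs_re_le_norm q).trans (norm_star_dotProduct_mulVec_le F x)
  rw [hpq, Complex.norm_add_mul_I, ← Real.sqrt_sq (by positivity : 0 ≤ ‖toLp 2 x‖ ^ 2),
    ← Real.sqrt_mul (by positivity)]
  gcongr
  nlinarith [sq_abs p.re, sq_abs q.re, abs_nonneg p.re, abs_nonneg q.re]

end Matrix

theorem specNorm_eq_norm {m n : Type*} [Fintype m] [Fintype n] [DecidableEq n]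
    (M : Matrix m n ℂ) : specNorm M = ‖M‖ :=
  rfl

section Pencil

variable {n : ℕ}

theorem crawford_mul_sq_le (A B : Matrix (Fin n) (Fin n) ℂ) (x : Fin n → ℂ) :
    crawford A B * ‖toLp 2 x‖ ^ 2 ≤ ‖star x ⬝ᵥ (A + Complex.I • B) *ᵥ x‖ := by
  obtain rfl | hx := eq_or_ne x 0
  · simp
  set M := A + Complex.I • B
  have hx' : 0 < ‖toLp 2 x‖ := by simpa using hx
  set c : ℝ := ‖toLp 2 x‖⁻¹
  have hunit : ‖toLp 2 ((c : ℂ) • x)‖ = 1 := by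
    rw [WithLp.toLp_smul, norm_smul, Complex.norm_real, Real.norm_eq_abs,
      abs_of_pos (inv_pos.mpr hx'), inv_mul_cancel₀ hx'.ne']
  have hscale : star ((c : ℂ) • x) ⬝ᵥ M *ᵥ ((c : ℂ) • x) =
      ((c ^ 2 : ℝ) : ℂ) * (star x ⬝ᵥ M *ᵥ x) := by
    rw [star_smul, mulVec_smul, smul_dotProduct, dotProduct_smul, Complex.star_def,
      Complex.conj_ofReal]
    simp only [smul_eq_mul]; push_cast; ring
  have hle : crawford A B ≤ ‖star ((c : ℂ) • x) ⬝ᵥ M *ᵥ ((c : ℂ) • x)‖ :=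
    csInf_le ⟨0, by rintro _ ⟨y, -, rfl⟩; positivity⟩ ⟨toLp 2 ((c : ℂ) • x), hunit, rfl⟩
  rw [hscale, norm_mul, Complex.norm_real, Real.norm_eq_abs, abs_of_nonneg (sq_nonneg c),
    inv_pow, inv_mul_eq_div, le_div_iff₀ (by positivity)] at hle
  exact hle

variable {A B : Matrix (Fin n) (Fin n) ℂ}

theorem symPseudo_subset_genPseudo (ε : ℝ) : symPseudo ε A B ⊆ genPseudo ε A B := by
  rintro z ⟨E, F, -, -, hEF, hz⟩
  exact ⟨E, F, (Real.le_sqrt_of_sq_le (le_add_of_nonneg_right (sq_nonneg _))).trans hEF,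
    (Real.le_sqrt_of_sq_le (le_add_of_nonneg_left (sq_nonneg _))).trans hEF, hz⟩

theorem im_eq_zero_of_mem_symPseudo (hA : A.IsHermitian) (hB : B.IsHermitian) {ε : ℝ}
    (hεγ : ε < crawford A B) {z : ℂ} (hz : z ∈ symPseudo ε A B) : z.im = 0 := by
  obtain ⟨E, F, hE, hF, hEF, u, hu, h⟩ := hz
  refine im_eq_zero_of_mulVec_eq_smul_mulVec (hA.add hE) (hB.add hF) ?_ h
  have hsplit : A + E + Complex.I • (B + F) = (A + Complex.I • B) + (E + Complex.I • F) := by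
    rw [smul_add]; abel
  rw [hsplit, add_mulVec, dotProduct_add, Ne, add_eq_zero_iff_eq_neg]
  intro h0
  have hu' : 0 < ‖toLp 2 u‖ ^ 2 := pow_pos (by simpa using hu) 2
  have hcr := crawford_mul_sq_le A B u
  rw [h0, norm_neg] at hcr
  have hpert := norm_star_dotProduct_add_I_smul_mulVec_le hE hF u
  rw [← specNorm_eq_norm E, ← specNorm_eq_norm F] at hpert
  nlinarith

theorem ofReal_mem_symPseudo_of_norm_sub_mulVec_le (hA : A.IsHermitian) (hB : B.IsHermitian)
    {ε t : ℝ} (hε : 0 ≤ ε) {u : Fin n → ℂ} (hu : u ≠ 0)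
    (hres : ‖toLp 2 ((t : ℂ) • B *ᵥ u - A *ᵥ u)‖ ≤ ε * √(1 + t ^ 2) * ‖toLp 2 u‖) :
    (t : ℂ) ∈ symPseudo ε A B := by
  set s : ℝ := 1 + t ^ 2
  have hs : 0 < s := by positivity
  have hur : RCLike.im (star u ⬝ᵥ ((t : ℂ) • B *ᵥ u - A *ᵥ u)) = 0 := by
    have hAu : (star u ⬝ᵥ A *ᵥ u).im = 0 := hA.im_star_dotProduct_mulVec_self u
    have hBu : (star u ⬝ᵥ B *ᵥ u).im = 0 := hB.im_star_dotProduct_mulVec_self u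
    simp [dotProduct_sub, dotProduct_smul, Complex.mul_im, hAu, hBu]
  obtain ⟨H, hH, hHu, hHn⟩ := exists_isHermitian_mulVec_eq hu hur
  have hHε : ‖H‖ ^ 2 ≤ ε ^ 2 * s := by
    have := le_of_mul_le_mul_right (hHn.trans hres) (by simpa using hu)
    calc ‖H‖ ^ 2 ≤ (ε * √s) ^ 2 := by gcongr
      _ = ε ^ 2 * s := by rw [mul_pow, Real.sq_sqrt hs.le]
  refine ⟨((s⁻¹ : ℝ) : ℂ) • H, ((-t / s : ℝ) : ℂ) • H, hH.smul (Complex.conj_ofReal _),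
    hH.smul (Complex.conj_ofReal _), ?_, u, hu, ?_⟩
  · simp only [specNorm_eq_norm, norm_smul, Complex.norm_real, Real.norm_eq_abs, mul_pow, sq_abs]
    rw [Real.sqrt_le_left hε]
    calc s⁻¹ ^ 2 * ‖H‖ ^ 2 + (-t / s) ^ 2 * ‖H‖ ^ 2 = ‖H‖ ^ 2 / s := by
          field_simp; ring
      _ ≤ ε ^ 2 := by rwa [div_le_iff₀ hs]
  · rw [add_mulVec, add_mulVec, smul_mulVec, smul_mulVec, hHu]
    have hcoef : ((s⁻¹ : ℝ) : ℂ) - t * ((-t / s : ℝ) : ℂ) = 1 := by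
      have : s⁻¹ - t * (-t / s) = 1 := by field_simp; ring
      exact_mod_cast this
    linear_combination (norm := module) hcoef • ((t : ℂ) • B *ᵥ u - A *ᵥ u)

end Pencil

theorem symPseudo_between_genPseudo {n : ℕ} (A B : Matrix (Fin n) (Fin n) ℂ)
    (hA : A.IsHermitian) (hB : B.IsHermitian)
    (ε : ℝ) (hε : 0 < ε) (hεγ : ε < crawford A B) :
    { z : ℂ | z ∈ genPseudo (ε / Real.sqrt 2) A B ∧ z.im = 0 } ⊆ symPseudo ε A B ∧
    symPseudo ε A B ⊆ { z : ℂ | z ∈ genPseudo ε A B ∧ z.im = 0 } := by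
  refine ⟨?_, fun z hz ↦
    ⟨symPseudo_subset_genPseudo ε hz, im_eq_zero_of_mem_symPseudo hA hB hεγ hz⟩⟩
  rintro z ⟨⟨E, F, hE, hF, u, hu, h⟩, hz⟩
  obtain ⟨t, rfl⟩ : ∃ t : ℝ, (t : ℂ) = z := ⟨z.re, Complex.ext rfl hz.symm⟩
  rw [specNorm_eq_norm] at hE hF
  refine ofReal_mem_symPseudo_of_norm_sub_mulVec_le hA hB hε.le hu ?_
  have ht : ‖(t : ℂ)‖ ^ 2 = t ^ 2 := by rw [Complex.norm_real, Real.norm_eq_abs, sq_abs]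
  calc _ ≤ (‖E‖ + ‖(t : ℂ)‖ * ‖F‖) * ‖toLp 2 u‖ := norm_sub_mulVec_le_of_add_mulVec_eq h
    _ ≤ ε / √2 * (1 + ‖(t : ℂ)‖) * ‖toLp 2 u‖ := by
        gcongr
        nlinarith [norm_nonneg (t : ℂ)]
    _ ≤ ε / √2 * (√2 * √(1 + t ^ 2)) * ‖toLp 2 u‖ := by
        gcongr
        rw [← ht]
        exact one_add_norm_le_sqrt_two_mul_sqrt _
    _ = ε * √(1 + t ^ 2) * ‖toLp 2 u‖ := by field_simp
end

section
/- Let (A,B) be an n×n definite pencil with eigenvalues λ₁,…,λₙ and ε < min{σₙ(B), γ(A,B)}. For each i let rᵢ = 1/||B||₂ if A = 0 and rᵢ = max{1/||B||₂, |λᵢ|/||A||₂} otherwise. Then the union of open intervals (λᵢ − εrᵢ, λᵢ + εrᵢ) is contained in Λ_ε^sym(A,B). -/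
open Matrix MeasureTheory ProbabilityTheory
open scoped Classical

/-!
An eigenpair `A u = λ B u` of the pencil survives two Hermitian perturbations of `A` that keep `u`
as eigenvector: `E = (t - λ) B` moves `λ` to `t` at cost `|t - λ| ‖B‖₂`, and for `λ ≠ 0`,
`E = ((t - λ) / λ) A` moves it to `t` at cost `|t - λ| ‖A‖₂ / |λ|`. Whichever is cheaper stays
within `ε` on the interval `|t - λ| < ε max (1 / ‖B‖₂, |λ| / ‖A‖₂)`.
-/

lemma specNorm_zero {m n : Type*} [Fintype m] [Fintype n] [DecidableEq n] :
    specNorm (0 : Matrix m n ℂ) = 0 := by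
  simp [specNorm]

lemma specNorm_nonneg {m n : Type*} [Fintype m] [Fintype n] [DecidableEq n]
    (M : Matrix m n ℂ) : 0 ≤ specNorm M :=
  norm_nonneg _

lemma specNorm_smul {m n : Type*} [Fintype m] [Fintype n] [DecidableEq n] (c : ℂ)
    (M : Matrix m n ℂ) : specNorm (c • M) = ‖c‖ * specNorm M := by
  simp only [specNorm, map_smul]
  exact norm_smul c _

lemma Matrix.IsHermitian.ofReal_smul {n : Type*} {M : Matrix n n ℂ} (hM : M.IsHermitian)
    (τ : ℝ) : ((τ : ℂ) • M).IsHermitian :=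
  hM.smul ((Complex.im_eq_zero_iff_isSelfAdjoint _).mp rfl)

lemma mul_le_of_lt_mul_inv {x ε c : ℝ} (hx : 0 ≤ x) (hc : 0 ≤ c) (h : x < ε * c⁻¹) :
    x * c ≤ ε := by
  rcases hc.eq_or_lt with rfl | hc
  · simp only [_root_.inv_zero, mul_zero] at h
    exact absurd h hx.not_gt
  · exact ((lt_mul_inv_iff₀ hc).mp h).le

lemma mem_symPseudo_of_isHermitian_perturbation {n : ℕ} {ε : ℝ}
    {A B E : Matrix (Fin n) (Fin n) ℂ} (hE : E.IsHermitian) (hEε : specNorm E ≤ ε)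
    {z : ℂ} {u : Fin n → ℂ} (hu : u ≠ 0) (h : (A + E) *ᵥ u = z • B *ᵥ u) :
    z ∈ symPseudo ε A B := by
  refine ⟨E, 0, hE, isHermitian_zero, ?_, u, hu, by simpa using h⟩
  simpa [specNorm_zero, Real.sqrt_sq (specNorm_nonneg E)] using hEε

section Perturbation

variable {n : ℕ} {ε : ℝ} {A B : Matrix (Fin n) (Fin n) ℂ} {l t : ℝ}

lemma mem_symPseudo_of_shift (hB : B.IsHermitian) (hl : l ∈ pencilEigs A B)
    (ht : |t - l| * specNorm B ≤ ε) : (t : ℂ) ∈ symPseudo ε A B := by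
  obtain ⟨u, hu, hAu⟩ := hl
  refine mem_symPseudo_of_isHermitian_perturbation (hB.ofReal_smul (t - l))
    (by rwa [specNorm_smul, Complex.norm_real, Real.norm_eq_abs]) hu ?_
  rw [add_mulVec, hAu, smul_mulVec, ← add_smul]
  push_cast
  ring_nf

lemma mem_symPseudo_of_scale (hA : A.IsHermitian) (hl : l ∈ pencilEigs A B) (hl0 : l ≠ 0)
    (ht : |t - l| * specNorm A ≤ ε * |l|) : (t : ℂ) ∈ symPseudo ε A B := by
  obtain ⟨u, hu, hAu⟩ := hl
  have hbound : ‖(((t - l) / l : ℝ) : ℂ)‖ * specNorm A ≤ ε := by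
    rw [Complex.norm_real, Real.norm_eq_abs, abs_div, div_mul_eq_mul_div,
      div_le_iff₀ (abs_pos.mpr hl0)]
    exact ht
  refine mem_symPseudo_of_isHermitian_perturbation (hA.ofReal_smul ((t - l) / l))
    (by rw [specNorm_smul]; exact hbound) hu ?_
  rw [add_mulVec, smul_mulVec, hAu, smul_smul, ← add_smul]
  congr 1
  have hlC : (l : ℂ) ≠ 0 := Complex.ofReal_ne_zero.mpr hl0
  push_cast
  field_simp
  ring

end Perturbation

theorem definite_bauer_fike_lower_general {n : ℕ} (A B : Matrix (Fin n) (Fin n) ℂ)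
    (hA : A.IsHermitian) (hB : B.IsHermitian)
    (lam : Fin n → ℝ)
    (heig : ∀ i, lam i ∈ pencilEigs A B)
    (ε : ℝ) (hε : 0 < ε) :
    ∀ i : Fin n, ∀ t : ℝ,
      |t - lam i| < ε * (if A = 0 then (specNorm B)⁻¹
        else max (specNorm B)⁻¹ (|lam i| / specNorm A)) →
      (t : ℂ) ∈ symPseudo ε A B := by
  intro i t h
  have hdist := abs_nonneg (t - lam i)
  have shift (hlt : |t - lam i| < ε * (specNorm B)⁻¹) : (t : ℂ) ∈ symPseudo ε A B :=
    mem_symPseudo_of_shift hB (heig i)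
      (mul_le_of_lt_mul_inv hdist (specNorm_nonneg B) hlt)
  by_cases hA0 : A = 0
  · rw [if_pos hA0] at h
    exact shift h
  · rw [if_neg hA0, mul_max_of_nonneg _ _ hε.le, lt_max_iff] at h
    rcases h with h | h
    · exact shift h
    · rw [← mul_div_assoc, div_eq_mul_inv] at h
      have hl0 : lam i ≠ 0 := by
        rintro hl
        simp only [hl, sub_zero, abs_zero, mul_zero, zero_mul] at h
        exact (abs_nonneg t).not_gt h
      exact mem_symPseudo_of_scale hA (heig i) hl0
        (mul_le_of_lt_mul_inv hdist (specNorm_nonneg A) h)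

theorem definite_bauer_fike_lower {n : ℕ} (A B : Matrix (Fin n) (Fin n) ℂ)
    (hA : A.IsHermitian) (hB : B.IsHermitian) (hdef : 0 < crawford A B)
    (lam : Fin n → ℝ)
    (heig : ∀ i, lam i ∈ pencilEigs A B)
    (hcover : ∀ t ∈ pencilEigs A B, ∃ i, lam i = t)
    (ε : ℝ) (hε : 0 < ε) (hεB : ε < smin B) (hεγ : ε < crawford A B) :
    ∀ i : Fin n, ∀ t : ℝ,
      |t - lam i| < ε * (if A = 0 then (specNorm B)⁻¹
        else max (specNorm B)⁻¹ (|lam i| / specNorm A)) →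
      (t : ℂ) ∈ symPseudo ε A B :=
  definite_bauer_fike_lower_general A B hA hB lam heig ε hε
end
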